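/- arXiv:1110.0870 — 2 statements merged into one kernel-verified Lean document; each statement's English description precedes it below -/
import Mathlib

section
/- For all real n > 3/2 and all x ≥ 0: (x + sqrt(4n - 6 + x²))/(2n - 1) < U(n,-x)/U(n-1,-x) < (x + sqrt(4n - 2 + x²))/(2n - 1). The upper bound also holds for n ∈ (1/2, 3/2). -/
open Filter

/-- The parabolic cylinder function `U(a,x)` (DLMF §12), characterized as a
family `U` (with `x`-derivative `U'`) of solutions of `y'' = (x²/4 + a) y`
that is recessive as `x → +∞`, positive for `a > -1/2`, and satisfies the
recurrence `U(a-1,x) = x U(a,x) + (a + 1/2) U(a+1,x)`. -/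
structure IsParabolicCylinderU (U U' : ℝ → ℝ → ℝ) : Prop where
  hasDeriv : ∀ a x : ℝ, HasDerivAt (U a) (U' a x) x
  ode : ∀ a x : ℝ, HasDerivAt (U' a) ((x ^ 2 / 4 + a) * U a x) x
  recessive : ∀ a : ℝ, Tendsto (U a) atTop (nhds 0)
  pos : ∀ a x : ℝ, -1/2 < a → 0 < U a x
  recurrence : ∀ a x : ℝ, U (a - 1) x = x * U a x + (a + 1/2) * U (a + 1) x

/-!
The recurrence alone does not determine `U'`. But `U'(a,·) + (x/2) U(a,·) + (a + 1/2) U(a+1,·)`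
solves the equation of `U(a+1,·)` and is recessive (the decay needed comes from
`U'' = (x²/4 + a) U ≥ U` for large `x`), so it is a multiple of `U(a+1,·)`; differentiating once
more and using the recurrence shows that the multiple is zero:
`U'(a,x) = -(x/2) U(a,x) - (a + 1/2) U(a+1,x)`.

With `s(y) = √(4n - 2 + y²)`, the function `h = 2 U'(n,·) + s U(n,·)` has positive derivative
at each of its zeros, and the recurrence makes it negative for large `y`, so `h < 0` everywhere.
Since `U'(n,y) = (y/2) U(n,y) - U(n-1,y)`, this is the upper bound, for every real `y`. The lower
bound is the upper bound for `n - 1` combined with `U(n-2,y) = y U(n-1,y) + (n - 1/2) U(n,y)`.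
-/

open Set Real Topology

lemma nonneg_of_deriv_pos_at_zeros {h : ℝ → ℝ} (hcont : Continuous h)
    (hzero : ∀ y, h y = 0 → 0 < deriv h y) {a b : ℝ} (ha : 0 ≤ h a) (hab : a ≤ b) :
    0 ≤ h b := by
  refine (isClosed_le continuous_const hcont).inter isClosed_Icc
    |>.Icc_subset_of_forall_mem_nhdsWithin ha (fun y ⟨hy, _⟩ => ?_) ⟨hab, le_rfl⟩
  rcases (show 0 ≤ h y from hy).lt_or_eq with hpos | hy0
  · exact mem_nhdsWithin_of_mem_nhds <|
      (continuousAt_const.eventually_lt hcont.continuousAt hpos).mono fun _ => le_of_lt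
  · filter_upwards [(eventually_nhdsWithin_sign_eq_of_deriv_pos (hzero y hy0.symm)
      hy0.symm).filter_mono nhdsWithin_le_nhds, self_mem_nhdsWithin] with z hsign hz
    rw [sign_pos (sub_pos.mpr hz), sign_eq_one_iff] at hsign
    exact hsign.le

lemma pos_of_deriv_pos_at_zeros {h : ℝ → ℝ} (hcont : Continuous h)
    (hzero : ∀ y, h y = 0 → 0 < deriv h y) {a b : ℝ} (ha : 0 ≤ h a) (hab : a < b) :
    0 < h b := by
  refine (nonneg_of_deriv_pos_at_zeros hcont hzero ha hab.le).lt_of_ne fun hb => ?_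
  obtain ⟨z, hsign, hz⟩ := (((eventually_nhdsWithin_sign_eq_of_deriv_pos (hzero b hb.symm)
    hb.symm).filter_mono nhdsWithin_le_nhds).and (Ioo_mem_nhdsLT hab)).exists
  rw [sign_neg (sub_neg.mpr hz.2), sign_eq_neg_one_iff] at hsign
  exact hsign.not_ge (nonneg_of_deriv_pos_at_zeros hcont hzero ha hz.1.le)

lemma image_sub_bounds_of_monotoneOn_deriv {f f' : ℝ → ℝ} (hf : ∀ x, HasDerivAt f (f' x) x)
    {X : ℝ} (hmono : MonotoneOn f' (Ici X)) {a b : ℝ} (hXa : X ≤ a) (hab : a ≤ b) :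
    f' a * (b - a) ≤ f b - f a ∧ f b - f a ≤ f' b * (b - a) := by
  have hcont : ContinuousOn f (Icc a b) := fun x _ => (hf x).continuousAt.continuousWithinAt
  have hdiff : DifferentiableOn ℝ f (interior (Icc a b)) :=
    fun x _ => (hf x).differentiableAt.differentiableWithinAt
  have hmem : ∀ x ∈ interior (Icc a b), X ≤ x ∧ a ≤ x ∧ x ≤ b := by
    rw [interior_Icc]; exact fun x hx => ⟨hXa.trans hx.1.le, hx.1.le, hx.2.le⟩
  constructor
  · refine (convex_Icc a b).mul_sub_le_image_sub_of_le_deriv hcont hdiff (fun x hx => ?_)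
      a (left_mem_Icc.2 hab) b (right_mem_Icc.2 hab) hab
    obtain ⟨hXx, hax, -⟩ := hmem x hx
    rw [(hf x).deriv]
    exact hmono hXa hXx hax
  · refine (convex_Icc a b).image_sub_le_mul_sub_of_deriv_le hcont hdiff (fun x hx => ?_)
      a (left_mem_Icc.2 hab) b (right_mem_Icc.2 hab) hab
    obtain ⟨hXx, -, hxb⟩ := hmem x hx
    rw [(hf x).deriv]
    exact hmono hXx (hXa.trans hab) hxb

lemma tendsto_mul_deriv_zero_of_monotoneOn {f f' : ℝ → ℝ} (hf : ∀ x, HasDerivAt f (f' x) x)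
    {X : ℝ} (hmono : MonotoneOn f' (Ici X)) (hlim : Tendsto f atTop (𝓝 0)) :
    Tendsto (fun x => x * f' x) atTop (𝓝 0) := by
  have hhalf : Tendsto (fun x => 2 * (f x - f (x / 2))) atTop (𝓝 0) := by
    simpa using (hlim.sub (hlim.comp (tendsto_id.atTop_div_const two_pos))).const_mul 2
  have hdouble : Tendsto (fun x => f (2 * x) - f x) atTop (𝓝 0) := by
    simpa using (hlim.comp (tendsto_id.const_mul_atTop two_pos)).sub hlim
  refine tendsto_of_tendsto_of_tendsto_of_le_of_le' hhalf hdouble ?_ ?_ <;>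
    filter_upwards [eventually_ge_atTop (2 * X), eventually_ge_atTop 0] with x hX hx
  · linarith [(image_sub_bounds_of_monotoneOn_deriv hf hmono (a := x / 2) (b := x)
      (by linarith) (by linarith)).2]
  · linarith [(image_sub_bounds_of_monotoneOn_deriv hf hmono (a := x) (b := 2 * x)
      (by linarith) (by linarith)).1]

lemma tendsto_deriv_zero_of_monotoneOn {f f' : ℝ → ℝ} (hf : ∀ x, HasDerivAt f (f' x) x)
    {X : ℝ} (hmono : MonotoneOn f' (Ici X)) (hlim : Tendsto f atTop (𝓝 0)) :
    Tendsto f' atTop (𝓝 0) := by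
  refine ((tendsto_mul_deriv_zero_of_monotoneOn hf hmono hlim).mul
    tendsto_inv_atTop_zero).congr' ?_ |>.trans (by rw [zero_mul])
  filter_upwards [eventually_ne_atTop 0] with x hx
  field_simp

lemma hasDerivAt_exp_const_mul (k x : ℝ) :
    HasDerivAt (fun x => exp (k * x)) (k * exp (k * x)) x := by
  simpa [mul_comm] using ((hasDerivAt_id x).const_mul k).exp

section SecondOrderODE

variable {f f' q : ℝ → ℝ}

lemma monotoneOn_deriv_of_ode (hf' : ∀ x, HasDerivAt f' (q x * f x) x) {X : ℝ}
    (hq : ∀ x ≥ X, 0 ≤ q x) (hpos : ∀ x ≥ X, 0 ≤ f x) : MonotoneOn f' (Ici X) :=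
  monotoneOn_of_hasDerivWithinAt_nonneg (convex_Ici X)
    (fun x _ => (hf' x).continuousAt.continuousWithinAt) (fun x _ => (hf' x).hasDerivWithinAt)
    (fun x hx => by
      rw [interior_Ici] at hx
      exact mul_nonneg (hq x hx.le) (hpos x hx.le))

/-- `g = f' + c f` satisfies `g' ≥ c g`, so `g e^{-cx}` increases and `g` cannot stay positive. -/
lemma deriv_add_const_mul_nonpos_of_ode (hf : ∀ x, HasDerivAt f (f' x) x)
    (hf' : ∀ x, HasDerivAt f' (q x * f x) x) {c X : ℝ} (hc : 0 ≤ c)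
    (hq : ∀ x ≥ X, c ^ 2 ≤ q x) (hpos : ∀ x ≥ X, 0 ≤ f x)
    (hlim : Tendsto f atTop (𝓝 0)) (hlim' : Tendsto f' atTop (𝓝 0)) {y : ℝ} (hy : X ≤ y) :
    f' y + c * f y ≤ 0 := by
  by_contra! hgy
  have hd : ∀ x, HasDerivAt (fun x => (f' x + c * f x) * exp (-c * x))
      ((q x - c ^ 2) * f x * exp (-c * x)) x := fun x =>
    (((hf' x).add ((hf x).const_mul c)).mul (hasDerivAt_exp_const_mul (-c) x)).congr_deriv
      (by simp only [Pi.add_apply]; ring)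
  have hψ : MonotoneOn (fun x => (f' x + c * f x) * exp (-c * x)) (Ici X) :=
    monotoneOn_of_hasDerivWithinAt_nonneg (convex_Ici X)
      (fun x _ => (hd x).continuousAt.continuousWithinAt) (fun x _ => (hd x).hasDerivWithinAt)
      (fun x hx => by
        rw [interior_Ici] at hx
        exact mul_nonneg (mul_nonneg (sub_nonneg.2 (hq x hx.le)) (hpos x hx.le)) (exp_pos _).le)
  have hgrow : ∀ z ≥ y, f' y + c * f y ≤ f' z + c * f z := by
    intro z hz
    have h2 : 1 ≤ exp (-c * y) * exp (c * z) := by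
      rw [← exp_add, one_le_exp_iff]; nlinarith
    calc f' y + c * f y ≤ (f' y + c * f y) * (exp (-c * y) * exp (c * z)) :=
          le_mul_of_one_le_right hgy.le h2
      _ = (f' y + c * f y) * exp (-c * y) * exp (c * z) := by ring
      _ ≤ (f' z + c * f z) * exp (-c * z) * exp (c * z) :=
          mul_le_mul_of_nonneg_right (hψ hy (hy.trans hz) hz) (exp_pos _).le
      _ = f' z + c * f z := by rw [mul_assoc, ← exp_add]; simp
  obtain ⟨z, hz, hzy⟩ := (((hlim'.add (hlim.const_mul c)).eventually_lt_const
    (by simpa using hgy)).and (eventually_ge_atTop y)).exists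
  linarith [hgrow z hzy]

lemma antitoneOn_mul_exp_of_ode (hf : ∀ x, HasDerivAt f (f' x) x)
    (hf' : ∀ x, HasDerivAt f' (q x * f x) x) {c X : ℝ} (hc : 0 ≤ c)
    (hq : ∀ x ≥ X, c ^ 2 ≤ q x) (hpos : ∀ x ≥ X, 0 ≤ f x)
    (hlim : Tendsto f atTop (𝓝 0)) (hlim' : Tendsto f' atTop (𝓝 0)) :
    AntitoneOn (fun x => f x * exp (c * x)) (Ici X) := by
  have hd : ∀ x, HasDerivAt (fun x => f x * exp (c * x)) ((f' x + c * f x) * exp (c * x)) x :=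
    fun x => ((hf x).mul (hasDerivAt_exp_const_mul c x)).congr_deriv (by ring)
  refine antitoneOn_of_hasDerivWithinAt_nonpos (convex_Ici X)
    (fun x _ => (hd x).continuousAt.continuousWithinAt) (fun x _ => (hd x).hasDerivWithinAt)
    (fun x hx => ?_)
  rw [interior_Ici] at hx
  exact mul_nonpos_of_nonpos_of_nonneg
    (deriv_add_const_mul_nonpos_of_ode hf hf' hc hq hpos hlim hlim' hx.le) (exp_pos _).le

lemma tendsto_pow_mul_zero_of_ode (hf : ∀ x, HasDerivAt f (f' x) x)
    (hf' : ∀ x, HasDerivAt f' (q x * f x) x) {X : ℝ} (hq : ∀ x ≥ X, 1 ≤ q x)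
    (hpos : ∀ x ≥ X, 0 ≤ f x) (hlim : Tendsto f atTop (𝓝 0))
    (hlim' : Tendsto f' atTop (𝓝 0)) (k : ℕ) :
    Tendsto (fun x => x ^ k * f x) atTop (𝓝 0) := by
  have hanti := antitoneOn_mul_exp_of_ode hf hf' zero_le_one (by simpa using hq) hpos hlim hlim'
  have hbound := (tendsto_pow_mul_exp_neg_atTop_nhds_zero k).const_mul (f X * exp (1 * X))
  rw [mul_zero] at hbound
  refine tendsto_of_tendsto_of_tendsto_of_le_of_le' tendsto_const_nhds hbound ?_ ?_ <;>
    filter_upwards [eventually_ge_atTop X, eventually_ge_atTop 0] with x hX hx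
  · exact mul_nonneg (pow_nonneg hx k) (hpos x hX)
  · calc x ^ k * f x = x ^ k * exp (-x) * (f x * exp (1 * x)) := by
          rw [one_mul, mul_mul_mul_comm, ← exp_add]; simp
      _ ≤ x ^ k * exp (-x) * (f X * exp (1 * X)) :=
          mul_le_mul_of_nonneg_left (hanti self_mem_Ici hX hX) (by positivity)
      _ = _ := mul_comm _ _

lemma exists_eq_const_mul_of_ode {g g' : ℝ → ℝ} (hf : ∀ x, HasDerivAt f (f' x) x)
    (hf' : ∀ x, HasDerivAt f' (q x * f x) x) (hg : ∀ x, HasDerivAt g (g' x) x)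
    (hg' : ∀ x, HasDerivAt g' (q x * g x) x) (hg0 : ∀ x, g x ≠ 0)
    (hW : Tendsto (fun x => f x * g' x - f' x * g x) atTop (𝓝 0)) :
    ∃ c, ∀ x, f x = c * g x := by
  have hW' : ∀ x, HasDerivAt (fun x => f x * g' x - f' x * g x) 0 x := fun x =>
    (((hf x).mul (hg' x)).sub ((hf' x).mul (hg x))).congr_deriv (by ring)
  have hWconst : ∀ x y, f x * g' x - f' x * g x = f y * g' y - f' y * g y :=
    is_const_of_deriv_eq_zero (fun x => (hW' x).differentiableAt) (fun x => (hW' x).deriv)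
  have hWzero : ∀ x, f x * g' x - f' x * g x = 0 := fun x =>
    tendsto_nhds_unique (tendsto_const_nhds.congr fun y => hWconst x y) hW
  have hratio : ∀ x y, f x / g x = f y / g y :=
    is_const_of_deriv_eq_zero (fun x => ((hf x).div (hg x) (hg0 x)).differentiableAt)
      (fun x => ((hf x).div (hg x) (hg0 x)).deriv.trans (by
        rw [div_eq_zero_iff]; left; linear_combination -hWzero x))
  exact ⟨f 0 / g 0, fun x => by rw [← hratio x 0, div_mul_cancel₀ _ (hg0 x)]⟩

end SecondOrderODE

lemma abs_lt_sqrt_add_sq {b : ℝ} (hb : 0 < b) (y : ℝ) : |y| < √(b + y ^ 2) := by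
  rw [lt_sqrt (abs_nonneg y), sq_abs]; linarith

lemma sqrt_add_sq_add_pos {b : ℝ} (hb : 0 < b) (y : ℝ) : 0 < √(b + y ^ 2) + y := by
  linarith [abs_lt_sqrt_add_sq hb y, neg_abs_le y]

lemma one_le_sq_div_four_add {a x : ℝ} (hx : 2 * |a| + 2 ≤ x) : 1 ≤ x ^ 2 / 4 + a := by
  nlinarith [neg_abs_le a, abs_nonneg a]

namespace IsParabolicCylinderU

variable {U U' : ℝ → ℝ → ℝ} {a n : ℝ}

lemma deriv_monotoneOn (hU : IsParabolicCylinderU U U') (ha : -1/2 < a) :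
    MonotoneOn (U' a) (Ici (2 * |a| + 2)) :=
  monotoneOn_deriv_of_ode (hU.ode a) (fun _ hx => zero_le_one.trans (one_le_sq_div_four_add hx))
    (fun x _ => (hU.pos a x ha).le)

lemma tendsto_mul_deriv (hU : IsParabolicCylinderU U U') (ha : -1/2 < a) :
    Tendsto (fun x => x * U' a x) atTop (𝓝 0) :=
  tendsto_mul_deriv_zero_of_monotoneOn (hU.hasDeriv a) (hU.deriv_monotoneOn ha) (hU.recessive a)

lemma tendsto_deriv (hU : IsParabolicCylinderU U U') (ha : -1/2 < a) :
    Tendsto (U' a) atTop (𝓝 0) :=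
  tendsto_deriv_zero_of_monotoneOn (hU.hasDeriv a) (hU.deriv_monotoneOn ha) (hU.recessive a)

lemma tendsto_pow_mul (hU : IsParabolicCylinderU U U') (ha : -1/2 < a) (k : ℕ) :
    Tendsto (fun x => x ^ k * U a x) atTop (𝓝 0) :=
  tendsto_pow_mul_zero_of_ode (hU.hasDeriv a) (hU.ode a) (fun _ => one_le_sq_div_four_add)
    (fun x _ => (hU.pos a x ha).le) (hU.recessive a) (hU.tendsto_deriv ha) k

lemma exists_deriv_eq (hU : IsParabolicCylinderU U U') (ha : -1/2 < a) :
    ∃ μ, ∀ x, U' a x = -(x / 2) * U a x + μ * U (a + 1) x := by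
  have ha1 : -1/2 < a + 1 := by linarith
  have hZ : ∀ x, HasDerivAt (fun x => U' a x + x / 2 * U a x + (a + 1/2) * U (a + 1) x)
      ((x ^ 2 / 4 + a + 1/2) * U a x + x / 2 * U' a x + (a + 1/2) * U' (a + 1) x) x := fun x =>
    (((hU.ode a x).add (((hasDerivAt_id x).div_const 2).mul (hU.hasDeriv a x))).add
      ((hU.hasDeriv (a + 1) x).const_mul _)).congr_deriv (by simp only [id]; ring)
  have hZ' : ∀ x, HasDerivAt
      (fun x => (x ^ 2 / 4 + a + 1/2) * U a x + x / 2 * U' a x + (a + 1/2) * U' (a + 1) x)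
      ((x ^ 2 / 4 + (a + 1)) * (U' a x + x / 2 * U a x + (a + 1/2) * U (a + 1) x)) x := fun x =>
    (((((((hasDerivAt_pow 2 x).div_const 4).add_const a).add_const (1/2)).mul
      (hU.hasDeriv a x)).add (((hasDerivAt_id x).div_const 2).mul (hU.ode a x))).add
      ((hU.ode (a + 1) x).const_mul _)).congr_deriv (by simp only [id]; push_cast; ring)
  have hZlim : Tendsto (fun x => U' a x + x / 2 * U a x + (a + 1/2) * U (a + 1) x)
      atTop (𝓝 0) := by
    have := ((hU.tendsto_deriv ha).add ((hU.tendsto_pow_mul ha 1).const_mul (1/2))).add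
      ((hU.recessive (a + 1)).const_mul (a + 1/2))
    simp only [mul_zero, add_zero] at this
    exact this.congr fun x => by ring
  have hZ'lim : Tendsto
      (fun x => (x ^ 2 / 4 + a + 1/2) * U a x + x / 2 * U' a x + (a + 1/2) * U' (a + 1) x)
      atTop (𝓝 0) := by
    have := ((((hU.tendsto_pow_mul ha 2).const_mul (1/4)).add
      ((hU.recessive a).const_mul (a + 1/2))).add ((hU.tendsto_mul_deriv ha).const_mul (1/2))).add
      ((hU.tendsto_deriv ha1).const_mul (a + 1/2))
    simp only [mul_zero, add_zero] at this
    exact this.congr fun x => by ring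
  obtain ⟨c, hc⟩ := exists_eq_const_mul_of_ode hZ hZ' (hU.hasDeriv (a + 1)) (hU.ode (a + 1))
    (fun x => (hU.pos (a + 1) x ha1).ne')
    (by simpa using (hZlim.mul (hU.tendsto_deriv ha1)).sub (hZ'lim.mul (hU.recessive (a + 1))))
  exact ⟨c - (a + 1/2), fun x => by linear_combination hc x⟩

lemma deriv_eq (hU : IsParabolicCylinderU U U') (ha : -1/2 < a) (x : ℝ) :
    U' a x = -(x / 2) * U a x - (a + 1/2) * U (a + 1) x := by
  obtain ⟨μ₀, h₀⟩ := hU.exists_deriv_eq ha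
  obtain ⟨μ₁, h₁⟩ := hU.exists_deriv_eq (a := a + 1) (by linarith)
  have hode : ∀ x,
      (x ^ 2 / 4 + a) * U a x = -(1/2) * U a x - x / 2 * U' a x + μ₀ * U' (a + 1) x :=
    fun x => (hU.ode a x).unique <|
      (((((hasDerivAt_id x).div_const 2).neg.mul (hU.hasDeriv a x)).add
        ((hU.hasDeriv (a + 1) x).const_mul μ₀)).congr_of_eventuallyEq
        (Eventually.of_forall h₀)).congr_deriv (by simp only [id, Pi.neg_apply]; ring)
  have hrec : ∀ x, U a x = x * U (a + 1) x + (a + 3/2) * U (a + 1 + 1) x := fun x => by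
    linear_combination (norm := ring_nf) hU.recurrence (a + 1) x
  have key : ∀ x, x * (a + 1/2 + μ₀) * U (a + 1) x
      + ((a + 1/2) * (a + 3/2) - μ₀ * μ₁) * U (a + 1 + 1) x = 0 := fun x => by
    linear_combination hode x - (x / 2) * h₀ x + μ₀ * h₁ x - (a + 1/2) * hrec x
  have hμ₁ : (a + 1/2) * (a + 3/2) - μ₀ * μ₁ = 0 := by
    simpa [(hU.pos (a + 1 + 1) 0 (by linarith)).ne'] using key 0
  have hμ₀ : μ₀ = -(a + 1/2) := by
    have := key 1
    rw [hμ₁, zero_mul, add_zero, one_mul, mul_eq_zero] at this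
    linear_combination this.resolve_right (hU.pos (a + 1) 1 (by linarith)).ne'
  rw [h₀, hμ₀]; ring

lemma deriv_eq_sub (hU : IsParabolicCylinderU U U') (ha : -1/2 < a) (x : ℝ) :
    U' a x = x / 2 * U a x - U (a - 1) x := by
  linear_combination hU.deriv_eq ha x + hU.recurrence a x

lemma two_mul_deriv_add_sqrt_mul_neg_of_large (hU : IsParabolicCylinderU U U')
    (hn : 1/2 < n) {y : ℝ} (hy : 0 < y) (hy2 : (n - 1/2) * (n + 3/2) < y ^ 2) :
    2 * U' n y + √(4 * n - 2 + y ^ 2) * U n y < 0 := by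
  set s := √(4 * n - 2 + y ^ 2)
  have hs : s ^ 2 = 4 * n - 2 + y ^ 2 := sq_sqrt (by nlinarith)
  have hys : y < s := by simpa [abs_of_pos hy] using abs_lt_sqrt_add_sq (by linarith) y
  have hsy : y * (s - y) ≤ 2 * n - 1 := by nlinarith
  have hrec₁ := hU.recurrence (n + 1) y
  have hrec₂ := hU.recurrence (n + 1 + 1) y
  rw [add_sub_cancel_right] at hrec₁ hrec₂
  have h₀ := hU.pos n y (by linarith)
  have h₂ := hU.pos (n + 1 + 1) y (by linarith)
  have h₃ := hU.pos (n + 1 + 1 + 1) y (by linarith)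
  have key : y * ((s - y) * U n y - (2 * n + 1) * U (n + 1) y) < 0 := by
    calc y * ((s - y) * U n y - (2 * n + 1) * U (n + 1) y)
        ≤ (2 * n - 1) * U n y - (2 * n + 1) * (y * U (n + 1) y) := by nlinarith
      _ = (2 * n - 1) * (n + 3/2) * U (n + 1 + 1) y - 2 * y * U (n + 1) y := by
          rw [hrec₁]; ring
      _ < 0 := by nlinarith [mul_pos hy h₃]
  rw [hU.deriv_eq (by linarith)]
  linarith [neg_of_mul_neg_right key hy.le]

lemma hasDerivAt_two_mul_deriv_add_sqrt_mul (hU : IsParabolicCylinderU U U') (hn : 1/2 < n)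
    (y : ℝ) :
    HasDerivAt (fun y => 2 * U' n y + √(4 * n - 2 + y ^ 2) * U n y)
      (2 * ((y ^ 2 / 4 + n) * U n y) + y / √(4 * n - 2 + y ^ 2) * U n y
        + √(4 * n - 2 + y ^ 2) * U' n y) y := by
  have hpos : 0 < 4 * n - 2 + y ^ 2 := by nlinarith
  refine (((hU.ode n y).const_mul 2).add ((((hasDerivAt_pow 2 y).const_add (4 * n - 2)).sqrt
    hpos.ne').mul (hU.hasDeriv n y))).congr_deriv ?_
  field_simp [(sqrt_pos.2 hpos).ne']
  ring

lemma deriv_two_mul_deriv_add_sqrt_mul_pos (hU : IsParabolicCylinderU U U') (hn : 1/2 < n)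
    {y : ℝ} (hy : 2 * U' n y + √(4 * n - 2 + y ^ 2) * U n y = 0) :
    0 < deriv (fun y => 2 * U' n y + √(4 * n - 2 + y ^ 2) * U n y) y := by
  rw [(hU.hasDerivAt_two_mul_deriv_add_sqrt_mul hn y).deriv]
  set s := √(4 * n - 2 + y ^ 2)
  have hs : s ^ 2 = 4 * n - 2 + y ^ 2 := sq_sqrt (by nlinarith)
  have hs0 : 0 < s := sqrt_pos.2 (by nlinarith)
  have hys : y / s * U n y * s = y * U n y := by field_simp
  refine pos_of_mul_pos_left (b := s) ?_ hs0.le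
  -- Substituting `2 U' = -s U` leaves `(s + y) U`.
  rw [show (2 * ((y ^ 2 / 4 + n) * U n y) + y / s * U n y + s * U' n y) * s
      = (s + y) * U n y by linear_combination hys + (s ^ 2 / 2) * hy - (s * U n y / 2) * hs]
  exact mul_pos (sqrt_add_sq_add_pos (by linarith) y) (hU.pos n y (by linarith))

lemma two_mul_deriv_add_sqrt_mul_neg (hU : IsParabolicCylinderU U U') (hn : 1/2 < n)
    (y : ℝ) : 2 * U' n y + √(4 * n - 2 + y ^ 2) * U n y < 0 := by
  obtain ⟨Y, hyY, hY⟩ := ((eventually_gt_atTop (max y 0)).and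
    ((tendsto_pow_atTop two_ne_zero).eventually_gt_atTop ((n - 1/2) * (n + 3/2)))).exists
  have hcont : Continuous (fun y => 2 * U' n y + √(4 * n - 2 + y ^ 2) * U n y) :=
    continuous_iff_continuousAt.2 fun y =>
      (hU.hasDerivAt_two_mul_deriv_add_sqrt_mul hn y).continuousAt
  by_contra! hnonneg
  exact (hU.two_mul_deriv_add_sqrt_mul_neg_of_large hn ((le_max_right _ _).trans_lt hyY)
    hY).not_gt (pos_of_deriv_pos_at_zeros hcont
      (fun _ => hU.deriv_two_mul_deriv_add_sqrt_mul_pos hn) hnonneg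
      ((le_max_left _ _).trans_lt hyY))

lemma sqrt_add_mul_lt (hU : IsParabolicCylinderU U U') (hn : 1/2 < n) (y : ℝ) :
    (√(4 * n - 2 + y ^ 2) + y) * U n y < 2 * U (n - 1) y := by
  linarith [hU.two_mul_deriv_add_sqrt_mul_neg hn y, hU.deriv_eq_sub (a := n) (by linarith) y]

lemma ratio_lt (hU : IsParabolicCylinderU U U') (hn : 1/2 < n) (y : ℝ) :
    U n y / U (n - 1) y < (√(4 * n - 2 + y ^ 2) - y) / (2 * n - 1) := by
  have hs := sq_sqrt (by nlinarith : 0 ≤ 4 * n - 2 + y ^ 2)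
  have hsy : 0 < √(4 * n - 2 + y ^ 2) - y := by
    linarith [abs_lt_sqrt_add_sq (by linarith : (0 : ℝ) < 4 * n - 2) y, le_abs_self y]
  have h := mul_lt_mul_of_pos_left (hU.sqrt_add_mul_lt hn y) hsy
  rw [show (√(4 * n - 2 + y ^ 2) - y) * ((√(4 * n - 2 + y ^ 2) + y) * U n y)
      = 2 * (2 * n - 1) * U n y by linear_combination U n y * hs] at h
  rw [div_lt_div_iff₀ (hU.pos (n - 1) y (by linarith)) (by linarith)]
  linarith

lemma lt_ratio (hU : IsParabolicCylinderU U U') (hn : 3/2 < n) (y : ℝ) :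
    (√(4 * n - 6 + y ^ 2) - y) / (2 * n - 1) < U n y / U (n - 1) y := by
  have h := hU.sqrt_add_mul_lt (n := n - 1) (by linarith) y
  have hrec := hU.recurrence (n - 1) y
  rw [show 4 * (n - 1) - 2 = 4 * n - 6 by ring, show n - 1 - 1 = n - 2 by ring] at h
  rw [show n - 1 - 1 = n - 2 by ring, sub_add_cancel] at hrec
  rw [div_lt_div_iff₀ (by linarith) (hU.pos (n - 1) y (by linarith))]
  linarith

end IsParabolicCylinderU

/-- For `n > 3/2` and `x ≥ 0`,
`(x + √(4n-6+x²))/(2n-1) < U(n,-x)/U(n-1,-x) < (x + √(4n-2+x²))/(2n-1)`;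
the upper bound also holds for `n ∈ (1/2, 3/2)`. -/
theorem pcf_neg_arg_ratio_bounds (U U' : ℝ → ℝ → ℝ)
    (hU : IsParabolicCylinderU U U') :
    (∀ n x : ℝ, 3/2 < n → 0 ≤ x →
      (x + Real.sqrt (4 * n - 6 + x ^ 2)) / (2 * n - 1) < U n (-x) / U (n - 1) (-x) ∧
      U n (-x) / U (n - 1) (-x) < (x + Real.sqrt (4 * n - 2 + x ^ 2)) / (2 * n - 1)) ∧
    (∀ n x : ℝ, 1/2 < n → n < 3/2 → 0 ≤ x →
      U n (-x) / U (n - 1) (-x) < (x + Real.sqrt (4 * n - 2 + x ^ 2)) / (2 * n - 1)) := by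
  have upper : ∀ n x : ℝ, 1/2 < n →
      U n (-x) / U (n - 1) (-x) < (x + √(4 * n - 2 + x ^ 2)) / (2 * n - 1) :=
    fun n x hn => by simpa [add_comm x] using hU.ratio_lt hn (-x)
  refine ⟨fun n x hn _ => ⟨?_, upper n x (by linarith)⟩, fun n x hn _ _ => upper n x hn⟩
  simpa [add_comm x] using hU.lt_ratio hn (-x)
end

section
/- For any α > 0, ν > -1 and x > 0, the Laguerre functions at negative argument satisfy 0 < L_{ν+1}^{α-1}(-x)/L_ν^{α}(-x) < (α + x + sqrt((α+x)² + 4(ν+1)x))/(2(ν+1)). -/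
/-!
Let `P = M(c; α + 1)` and `Q = M(c; α)`, with `c = ν + α + 1`, be the Gamma-normalised Kummer
series `M(c; d; x) = Σ Γ(c + k) x^k / (Γ(d + k) k!)`. Kummer's transformation
`e^{-x} M(c; d; x) = Γ(c) Σ (c - d)(c - d - 1)⋯(c - d - k + 1) x^k / (Γ(d + k) k!)`
gives `L_ν^α(-x) = e^{-x} P(x) / Γ(ν + 1)` and `L_{ν+1}^{α-1}(-x) = e^{-x} Q(x) / Γ(ν + 2)`,
so both are positive and their ratio is `Q / ((ν + 1) P)`.

The contiguous relations `x P' = Q - α P` and `Q' = Q + (ν + 1) P` make `r = Q / P` a solution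
of the Riccati equation `x r' = (ν + 1) x + (α + x) r - r²`, whose right-hand side vanishes at
the positive root `γ(x)` of `γ² = (α + x) γ + (ν + 1) x`; the bound is `γ(x) / (ν + 1)`.
Hence `γ P` is a barrier for `Q`: both agree at `0`, and wherever `Q = γ P` the relations give
`Q' = γ P'`, so `(γ P - Q)' = γ' P > 0` there.
-/

/-- The generalized Laguerre function `L_ν^{(α)}(x)` for real `ν, α`, defined
through the (entire, reciprocal-Gamma regularized) Kummer series
`L_ν^{(α)}(x) = (Γ(ν+α+1)/Γ(ν+1)) Σ_k (-ν)_k x^k / (Γ(α+1+k) k!)`,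
which for nonnegative integer `ν` is the Laguerre polynomial `L_n^{(α)}`. -/
noncomputable def lagL (ν α x : ℝ) : ℝ :=
  (Real.Gamma (ν + α + 1) / Real.Gamma (ν + 1)) *
    ∑' k : ℕ, (∏ j ∈ Finset.range k, ((j : ℝ) - ν)) * x ^ k /
      (Real.Gamma (α + 1 + k) * (Nat.factorial k : ℝ))

open Finset Real Filter
open scoped Nat

noncomputable def kummerCoeff (c d : ℝ) (k : ℕ) : ℝ :=
  Gamma (c + k) / (Gamma (d + k) * k !)

/-- `kummerSeries c d = Γ(c) / Γ(d) • ₁F₁(c; d; ·)`. -/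
noncomputable def kummerSeries (c d x : ℝ) : ℝ :=
  ∑' k, kummerCoeff c d k * x ^ k

section KummerCoeff

variable {c d : ℝ}

lemma kummerCoeff_pos (hc : 0 < c) (hd : 0 < d) (k : ℕ) : 0 < kummerCoeff c d k := by
  have := Gamma_pos_of_pos (by positivity : 0 < c + k)
  have := Gamma_pos_of_pos (by positivity : 0 < d + k)
  unfold kummerCoeff
  positivity

@[simp]
lemma kummerCoeff_zero : kummerCoeff c d 0 = Gamma c / Gamma d := by
  simp [kummerCoeff]

lemma succ_mul_kummerCoeff_succ (k : ℕ) :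
    (k + 1) * kummerCoeff c d (k + 1) = kummerCoeff (c + 1) (d + 1) k := by
  simp only [kummerCoeff, Nat.factorial_succ, Nat.cast_mul, Nat.cast_succ]
  rw [show c + (k + 1) = c + 1 + k by ring, show d + (k + 1) = d + 1 + k by ring]
  field_simp

lemma kummerCoeff_add_one_left (hc : 0 < c) (k : ℕ) :
    kummerCoeff (c + 1) d k = (c + k) * kummerCoeff c d k := by
  rw [kummerCoeff, kummerCoeff, add_right_comm, Gamma_add_one (by positivity)]
  ring

lemma kummerCoeff_add_one_right (hd : 0 < d) (k : ℕ) :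
    (d + k) * kummerCoeff c (d + 1) k = kummerCoeff c d k := by
  have : d + k ≠ 0 := by positivity
  rw [kummerCoeff, kummerCoeff, add_right_comm, Gamma_add_one this]
  field_simp

end KummerCoeff

lemma summable_of_abs_succ_le {f : ℕ → ℝ} (C : ℝ)
    (h : ∀ k : ℕ, |f (k + 1)| ≤ C / (k + 1) * |f k|) : Summable f := by
  refine summable_of_ratio_norm_eventually_le (r := 1 / 2) (by norm_num) ?_
  filter_upwards [eventually_ge_atTop ⌈2 * C⌉₊] with k hk
  have hC : C / (k + 1) ≤ 1 / 2 := by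
    rw [div_le_iff₀ (by positivity)]
    linarith [Nat.le_ceil (2 * C), (Nat.cast_le (α := ℝ)).mpr hk]
  exact (h k).trans (mul_le_mul_of_nonneg_right hC (abs_nonneg _))

lemma summable_kummerSeries {c d : ℝ} (hc : 0 < c) (hd : 0 < d) (x : ℝ) :
    Summable fun k => kummerCoeff c d k * x ^ k := by
  refine summable_of_abs_succ_le ((c / d + 1) * |x|) fun k => ?_
  have hdk : 0 < d + k := by positivity
  have hratio : kummerCoeff c d (k + 1) * (k + 1) * (d + k) = (c + k) * kummerCoeff c d k := by
    rw [← kummerCoeff_add_one_left hc, ← kummerCoeff_add_one_right hd k,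
      ← succ_mul_kummerCoeff_succ]
    ring
  have hck : c + k ≤ (c / d + 1) * (d + k) := by
    have : c / d * d = c := div_mul_cancel₀ c hd.ne'
    nlinarith [mul_nonneg (div_nonneg hc.le hd.le) (Nat.cast_nonneg (α := ℝ) k)]
  have hstep : kummerCoeff c d (k + 1) ≤ (c / d + 1) / (k + 1) * kummerCoeff c d k := by
    rw [div_mul_eq_mul_div, le_div_iff₀ (by positivity)]
    refine le_of_mul_le_mul_right ?_ hdk
    rw [hratio]
    nlinarith [kummerCoeff_pos hc hd k]
  rw [abs_mul, abs_mul, abs_of_pos (kummerCoeff_pos hc hd _),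
    abs_of_pos (kummerCoeff_pos hc hd _), abs_pow, abs_pow, pow_succ]
  calc kummerCoeff c d (k + 1) * (|x| ^ k * |x|)
      ≤ (c / d + 1) / (k + 1) * kummerCoeff c d k * (|x| ^ k * |x|) := by gcongr
    _ = (c / d + 1) * |x| / (k + 1) * (kummerCoeff c d k * |x| ^ k) := by ring

lemma hasDerivAt_tsum_mul_pow {a : ℕ → ℝ} (ha : ∀ r, Summable fun k => a k * r ^ k)
    (x : ℝ) :
    HasDerivAt (fun y => ∑' k, a k * y ^ k) (∑' k, (k + 1) * a (k + 1) * x ^ k) x := by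
  set R := |x| + 1
  have hR : 1 ≤ R := by simp [R]
  have hx : x ∈ Metric.ball (0 : ℝ) R := by simp [R]
  have hbound : ∀ k, ∀ y ∈ Metric.ball (0 : ℝ) R,
      ‖a k * (k * y ^ (k - 1))‖ ≤ |a k * (2 * R) ^ k| := by
    intro k y hy
    rw [mem_ball_zero_iff, Real.norm_eq_abs] at hy
    have hk : (k : ℝ) ≤ 2 ^ k := by exact_mod_cast Nat.lt_two_pow_self.le
    have hy' : |y| ^ (k - 1) ≤ R ^ k :=
      (pow_le_pow_left₀ (abs_nonneg y) hy.le _).trans (pow_le_pow_right₀ hR (Nat.sub_le k 1))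
    rw [Real.norm_eq_abs, abs_mul, abs_mul, abs_pow, Nat.abs_cast, abs_mul,
      abs_of_nonneg (by positivity : 0 ≤ (2 * R) ^ k), mul_pow]
    gcongr
  have hsum := (ha (2 * R)).abs
  have hD := hasDerivAt_tsum_of_isPreconnected (g := fun k y => a k * y ^ k) hsum
    Metric.isOpen_ball (convex_ball 0 R).isPreconnected
    (fun k y _ => (hasDerivAt_pow k y).const_mul (a k)) hbound hx (ha x) hx
  refine hD.congr_deriv ?_
  rw [(Summable.of_norm_bounded hsum fun k => hbound k x hx).tsum_eq_zero_add]
  simp only [CharP.cast_eq_zero, zero_mul, mul_zero, zero_add, Nat.cast_succ,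
    add_tsub_cancel_right]
  exact tsum_congr fun k => by ring

section KummerSeries

variable {c d : ℝ}

lemma hasDerivAt_kummerSeries (hc : 0 < c) (hd : 0 < d) (x : ℝ) :
    HasDerivAt (kummerSeries c d) (kummerSeries (c + 1) (d + 1) x) x := by
  have h := hasDerivAt_tsum_mul_pow (summable_kummerSeries hc hd) x
  simp only [succ_mul_kummerCoeff_succ] at h
  exact h

@[simp]
lemma kummerSeries_zero : kummerSeries c d 0 = Gamma c / Gamma d := by
  rw [kummerSeries, tsum_eq_single 0 fun k hk => by simp [hk]]
  simp

lemma kummerSeries_pos (hc : 0 < c) (hd : 0 < d) {x : ℝ} (hx : 0 ≤ x) :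
    0 < kummerSeries c d x :=
  (summable_kummerSeries hc hd x).tsum_pos
    (fun k => mul_nonneg (kummerCoeff_pos hc hd k).le (pow_nonneg hx k)) 0
    (by simpa using kummerCoeff_pos hc hd 0)

lemma kummerSeries_add_one_add_one (hc : 0 < c) (hd : 0 < d) (x : ℝ) :
    kummerSeries (c + 1) (d + 1) x =
      kummerSeries c d x + (c - d) * kummerSeries c (d + 1) x := by
  have hd' : 0 < d + 1 := by linarith
  rw [kummerSeries, kummerSeries, kummerSeries, ← tsum_mul_left,
    ← (summable_kummerSeries hc hd x).tsum_add ((summable_kummerSeries hc hd' x).mul_left _)]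
  refine tsum_congr fun k => ?_
  rw [kummerCoeff_add_one_left hc, ← kummerCoeff_add_one_right hd k]
  ring

lemma mul_kummerSeries_add_one_add_two (hc : 0 < c) (hd : 0 < d) (x : ℝ) :
    x * kummerSeries (c + 1) (d + 2) x = kummerSeries c d x - d * kummerSeries c (d + 1) x := by
  have hd' : 0 < d + 1 := by linarith
  rw [kummerSeries, kummerSeries, kummerSeries, ← tsum_mul_left, ← tsum_mul_left,
    ← (summable_kummerSeries hc hd x).tsum_sub ((summable_kummerSeries hc hd' x).mul_left _)]
  have hterm : ∀ k : ℕ, kummerCoeff c d k * x ^ k - d * (kummerCoeff c (d + 1) k * x ^ k) =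
      k * kummerCoeff c (d + 1) k * x ^ k := by
    intro k
    rw [← kummerCoeff_add_one_right hd k]
    ring
  simp only [hterm]
  rw [((summable_kummerSeries hc hd x).sub
    ((summable_kummerSeries hc hd' x).mul_left d)).congr hterm |>.tsum_eq_zero_add]
  rw [show d + 2 = d + 1 + 1 by ring]
  simp only [CharP.cast_eq_zero, zero_mul, zero_add, ← succ_mul_kummerCoeff_succ, Nat.cast_succ]
  exact tsum_congr fun k => by ring

end KummerSeries

section KummerTransformation

open PowerSeries

lemma tsum_coeff_mul_mul_pow {R : Type*} [NormedCommRing R] [CompleteSpace R] {f g : R⟦X⟧}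
    {x : R} (hf : Summable fun n => ‖coeff n f * x ^ n‖)
    (hg : Summable fun n => ‖coeff n g * x ^ n‖) :
    ∑' n, coeff n (f * g) * x ^ n = (∑' n, coeff n f * x ^ n) * ∑' n, coeff n g * x ^ n := by
  rw [tsum_mul_tsum_eq_tsum_sum_antidiagonal_of_summable_norm hf hg]
  refine tsum_congr fun n => ?_
  rw [coeff_mul, sum_mul]
  refine sum_congr rfl fun p hp => ?_
  rw [← mem_antidiagonal.mp hp, pow_add]
  ring

noncomputable def expNegSeries : ℝ⟦X⟧ :=
  PowerSeries.mk fun i => (-1 : ℝ) ^ i / i !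

lemma derivative_expNegSeries : d⁄dX ℝ expNegSeries = -expNegSeries := by
  ext k
  simp only [expNegSeries, coeff_derivative, coeff_mk, map_neg, Nat.factorial_succ,
    Nat.cast_mul, pow_succ]
  field_simp
  push_cast
  ring

variable {c d : ℝ}

lemma derivative_mk_kummerCoeff :
    d⁄dX ℝ (PowerSeries.mk (kummerCoeff c d)) =
      PowerSeries.mk (kummerCoeff (c + 1) (d + 1)) := by
  ext k
  rw [coeff_derivative, coeff_mk, coeff_mk, ← succ_mul_kummerCoeff_succ, mul_comm]

lemma coeff_expNegSeries_mul_mk_kummerCoeff (hc : 0 < c) (hd : 0 < d) (n : ℕ) :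
    coeff n (expNegSeries * PowerSeries.mk (kummerCoeff c d)) =
      Gamma c * (∏ j ∈ range n, (c - d - j)) / (Gamma (d + n) * n !) := by
  induction n generalizing c d with
  | zero => simp [coeff_mul, expNegSeries]
  | succ n ih =>
    -- `(e^{-X} M(c; d))' = e^{-X} M(c + 1; d + 1) - e^{-X} M(c; d)` read off at `Xⁿ`
    have h := congrArg (coeff n)
      (Derivation.leibniz (d⁄dX ℝ) expNegSeries (PowerSeries.mk (kummerCoeff c d)))
    rw [coeff_derivative, derivative_mk_kummerCoeff, derivative_expNegSeries, smul_eq_mul,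
      smul_eq_mul, mul_neg, map_add, map_neg, mul_comm (PowerSeries.mk _), ih hc hd,
      ih (by linarith) (by linarith)] at h
    have hdn : d + n ≠ 0 := by positivity
    rw [show c + 1 - (d + 1) = c - d by ring, Gamma_add_one hc.ne', add_right_comm,
      Gamma_add_one hdn] at h
    rw [prod_range_succ, Nat.factorial_succ, Nat.cast_mul, Nat.cast_succ, ← add_assoc,
      Gamma_add_one hdn]
    have := Gamma_pos_of_pos (by positivity : 0 < d + n)
    field_simp at h ⊢
    linear_combination h

lemma exp_neg_mul_kummerSeries (hc : 0 < c) (hd : 0 < d) (x : ℝ) :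
    exp (-x) * kummerSeries c d x =
      Gamma c * ∑' n : ℕ, (∏ j ∈ range n, (c - d - j)) * x ^ n / (Gamma (d + n) * n !) := by
  have hE : ∀ n : ℕ, (-1 : ℝ) ^ n / n ! * x ^ n = (-x) ^ n / n ! := fun n => by
    rw [neg_pow]; ring
  have hprod := tsum_coeff_mul_mul_pow (x := x)
    (f := expNegSeries) (g := PowerSeries.mk (kummerCoeff c d))
    (by simpa only [Real.norm_eq_abs, expNegSeries, coeff_mk, hE] using
      (Real.summable_pow_div_factorial (-x)).abs)
    (by simpa only [Real.norm_eq_abs, coeff_mk] using (summable_kummerSeries hc hd x).abs)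
  simp only [coeff_expNegSeries_mul_mk_kummerCoeff hc hd] at hprod
  simp only [expNegSeries, coeff_mk, hE] at hprod
  simp only [Real.exp_eq_exp_ℝ, NormedSpace.exp_eq_tsum_div, kummerSeries, ← hprod,
    ← tsum_mul_left]
  exact tsum_congr fun n => by ring

end KummerTransformation

lemma lagL_neg_eq {μ δ : ℝ} (hc : 0 < μ + δ + 1) (hd : 0 < δ + 1) (x : ℝ) :
    lagL μ δ (-x) = exp (-x) / Gamma (μ + 1) * kummerSeries (μ + δ + 1) (δ + 1) x := by
  have key := exp_neg_mul_kummerSeries hc hd x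
  simp only [show μ + δ + 1 - (δ + 1) = μ by ring] at key
  have hterm : ∀ k : ℕ, (∏ j ∈ range k, ((j : ℝ) - μ)) * (-x) ^ k =
      (∏ j ∈ range k, (μ - j)) * x ^ k := fun k => by
    have hsq : (-1 : ℝ) ^ k * (-1) ^ k = 1 := by rw [← mul_pow]; norm_num
    rw [show ∏ j ∈ range k, ((j : ℝ) - μ) = ∏ j ∈ range k, -(μ - j) from
      prod_congr rfl fun j _ => by ring, prod_neg, card_range, neg_pow]
    linear_combination (∏ j ∈ range k, (μ - j)) * x ^ k * hsq
  simp only [lagL, hterm]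
  rw [div_mul_eq_mul_div, ← key]
  ring

lemma image_lt_of_deriv_lt_deriv_boundary {f f' B B' : ℝ → ℝ} {a b : ℝ}
    (hf : ∀ t ∈ Set.Icc a b, HasDerivAt f (f' t) t)
    (hB : ∀ t ∈ Set.Icc a b, HasDerivAt B (B' t) t)
    (ha : f a ≤ B a) (bound : ∀ t ∈ Set.Ico a b, f t = B t → f' t < B' t) :
    ∀ ⦃t⦄, t ∈ Set.Ioo a b → f t < B t := by
  have hle : ∀ ⦃t⦄, t ∈ Set.Icc a b → f t ≤ B t :=
    image_le_of_deriv_right_lt_deriv_boundary'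
      (fun t ht => (hf t ht).continuousAt.continuousWithinAt)
      (fun t ht => (hf t (Set.Ico_subset_Icc_self ht)).hasDerivWithinAt) ha
      (fun t ht => (hB t ht).continuousAt.continuousWithinAt)
      (fun t ht => (hB t (Set.Ico_subset_Icc_self ht)).hasDerivWithinAt) bound
  intro t ht
  refine (hle (Set.Ioo_subset_Icc_self ht)).lt_of_ne fun heq => ?_
  -- at an interior contact point `B - f` has a local minimum, so its derivative vanishes
  have hmin : IsLocalMin (fun s => B s - f s) t :=
    Filter.mem_of_superset (Icc_mem_nhds ht.1 ht.2) fun s hs => by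
      simpa [heq] using hle hs
  have hzero := hmin.hasDerivAt_eq_zero
    ((hB t (Set.Ioo_subset_Icc_self ht)).sub (hf t (Set.Ioo_subset_Icc_self ht)))
  linarith [bound t (Set.Ioo_subset_Ico_self ht) heq]

/-- The positive root `r` of `r ^ 2 = (α + t) r + (ν + 1) t`. -/
noncomputable def riccatiRoot (α ν t : ℝ) : ℝ :=
  (α + t + √((α + t) ^ 2 + 4 * (ν + 1) * t)) / 2

section RiccatiRoot

variable {α ν t : ℝ}

lemma riccatiRoot_discriminant_pos (hα : 0 < α) (hν : -1 < ν) (ht : 0 ≤ t) :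
    0 < (α + t) ^ 2 + 4 * (ν + 1) * t := by
  have : 0 ≤ (ν + 1) * t := mul_nonneg (by linarith) ht
  nlinarith

lemma riccatiRoot_sq (h : 0 ≤ (α + t) ^ 2 + 4 * (ν + 1) * t) :
    riccatiRoot α ν t ^ 2 = (α + t) * riccatiRoot α ν t + (ν + 1) * t := by
  unfold riccatiRoot
  linear_combination (Real.sq_sqrt h) / 4

lemma riccatiRoot_zero (hα : 0 ≤ α) : riccatiRoot α ν 0 = α := by
  simp [riccatiRoot, Real.sqrt_sq hα]

lemma hasDerivAt_riccatiRoot (h : 0 < (α + t) ^ 2 + 4 * (ν + 1) * t) :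
    HasDerivAt (riccatiRoot α ν)
      ((1 + (α + t + 2 * (ν + 1)) / √((α + t) ^ 2 + 4 * (ν + 1) * t)) / 2) t := by
  have hD : HasDerivAt (fun s => (α + s) ^ 2 + 4 * (ν + 1) * s)
      (2 * (α + t) + 4 * (ν + 1)) t := by
    simpa using (((hasDerivAt_id t).const_add α).fun_pow 2).fun_add
      ((hasDerivAt_id t).const_mul (4 * (ν + 1)))
  have hs := (((hasDerivAt_id t).const_add α).add (hD.sqrt h.ne')).div_const 2
  refine hs.congr_deriv ?_
  field_simp
  ring

end RiccatiRoot

section Barrier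

variable {α ν t : ℝ}

lemma riccatiRoot_mul_kummerSeries_eq_of_eq (hα : 0 < α) (hν : -1 < ν) (ht : 0 < t)
    (heq : kummerSeries (ν + α + 1) α t =
      riccatiRoot α ν t * kummerSeries (ν + α + 1) (α + 1) t) :
    riccatiRoot α ν t * kummerSeries (ν + α + 1 + 1) (α + 2) t =
      kummerSeries (ν + α + 1 + 1) (α + 1) t := by
  have hc : 0 < ν + α + 1 := by linarith
  have hP := kummerSeries_add_one_add_one hc hα t
  have hQ := mul_kummerSeries_add_one_add_two hc hα t
  have hγ := riccatiRoot_sq (riccatiRoot_discriminant_pos hα hν ht.le).le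
  refine mul_left_cancel₀ ht.ne' ?_
  -- `t (γ P' - Q') = (γ - t) (Q - γ P) + P (γ² - (α + t) γ - (ν + 1) t)`
  linear_combination riccatiRoot α ν t * hQ - t * hP + (riccatiRoot α ν t - t) * heq +
    kummerSeries (ν + α + 1) (α + 1) t * hγ

lemma kummerSeries_lt_riccatiRoot_mul (hα : 0 < α) (hν : -1 < ν) (ht : 0 < t) :
    kummerSeries (ν + α + 1) α t <
      riccatiRoot α ν t * kummerSeries (ν + α + 1) (α + 1) t := by
  have hc : 0 < ν + α + 1 := by linarith
  have hα1 : 0 < α + 1 := by linarith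
  have hΓ := Gamma_pos_of_pos hα
  refine image_lt_of_deriv_lt_deriv_boundary (a := 0) (b := t + 1)
    (fun s _ => hasDerivAt_kummerSeries hc hα s)
    (fun s hs => (hasDerivAt_riccatiRoot (riccatiRoot_discriminant_pos hα hν hs.1)).mul
      (hasDerivAt_kummerSeries hc hα1 s))
    ?_ ?_ ⟨ht, by linarith⟩
  · refine le_of_eq ?_
    rw [Pi.mul_apply, kummerSeries_zero, kummerSeries_zero, riccatiRoot_zero hα.le,
      Gamma_add_one hα.ne']
    field_simp
  · rintro s ⟨hs0, -⟩ heq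
    rcases hs0.eq_or_lt with rfl | hspos
    · -- the contact identity degenerates at `0`; compare the Taylor coefficients instead
      simp only [kummerSeries_zero, riccatiRoot_zero hα.le, add_zero, mul_zero,
        Real.sqrt_sq hα.le]
      rw [Gamma_add_one hc.ne', Gamma_add_one hα1.ne', Gamma_add_one hα.ne', ← sub_pos]
      have := Gamma_pos_of_pos hc
      field_simp
      nlinarith [mul_pos this hc]
    · have hγ' : 0 ≤ (α + s + 2 * (ν + 1)) / √((α + s) ^ 2 + 4 * (ν + 1) * s) :=
        div_nonneg (by linarith) (Real.sqrt_nonneg _)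
      rw [show α + 1 + 1 = α + 2 by ring, riccatiRoot_mul_kummerSeries_eq_of_eq hα hν hspos heq]
      exact lt_add_of_pos_left _ (mul_pos (by linarith) (kummerSeries_pos hc hα1 hspos.le))

end Barrier

/-- For `α > 0`, `ν > -1` and `x > 0`:
`0 < L_{ν+1}^{α-1}(-x)/L_ν^{α}(-x) < (α + x + √((α+x)² + 4(ν+1)x))/(2(ν+1))`. -/
theorem laguerre_neg_arg_ratio_upper (α ν x : ℝ) (hα : 0 < α) (hν : -1 < ν)
    (hx : 0 < x) :
    0 < lagL (ν + 1) (α - 1) (-x) / lagL ν α (-x) ∧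
    lagL (ν + 1) (α - 1) (-x) / lagL ν α (-x) <
      (α + x + Real.sqrt ((α + x) ^ 2 + 4 * (ν + 1) * x)) / (2 * (ν + 1)) := by
  have hν1 : 0 < ν + 1 := by linarith
  have hc : 0 < ν + α + 1 := by linarith
  have hP := kummerSeries_pos hc (by linarith : 0 < α + 1) hx.le
  have hQ := kummerSeries_pos hc hα hx.le
  have hL : lagL ν α (-x) = exp (-x) / Gamma (ν + 1) * kummerSeries (ν + α + 1) (α + 1) x :=
    lagL_neg_eq hc (by linarith) x
  have hL' : lagL (ν + 1) (α - 1) (-x) =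
      exp (-x) / Gamma (ν + 1) * (kummerSeries (ν + α + 1) α x / (ν + 1)) := by
    rw [lagL_neg_eq (by linarith) (by linarith), Gamma_add_one hν1.ne',
      show ν + 1 + (α - 1) + 1 = ν + α + 1 by ring, show α - 1 + 1 = α by ring]
    field_simp
  have hbound : (α + x + √((α + x) ^ 2 + 4 * (ν + 1) * x)) / (2 * (ν + 1)) =
      riccatiRoot α ν x / (ν + 1) := by
    rw [riccatiRoot, div_div]
  have hEG : 0 < exp (-x) / Gamma (ν + 1) := div_pos (exp_pos _) (Gamma_pos_of_pos hν1)
  rw [hL, hL', mul_div_mul_left _ _ hEG.ne', div_right_comm, hbound]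
  exact ⟨by positivity, div_lt_div_of_pos_right
    ((div_lt_iff₀ hP).mpr (kummerSeries_lt_riccatiRoot_mul hα hν hx)) hν1⟩
end
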